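/- arXiv:2209.05119 — 2 statements merged into one kernel-verified Lean document; each statement's English description precedes it below -/
import Mathlib

section
/- For any x > 0, writing x = [x] + Σ_{j≥1} d_j s^{-j} with s-ary digits d_j, the limit λ(x) := lim_{k→∞} a(s^k x)/(s^k x)^{log_s p} exists, where a(y) := a_{⌊y⌋}. Moreover λ(sx) = λ(x) and λ(x) ∈ [m, M] for every x > 0. -/
open Real Filter Set MeasureTheory Topology
open scoped Classical ENNReal

/-- The Cantor-integer function: apply the digit map `h` to the `s`-ary digits of `n`
and read the result in base `p`. -/
def cantorInt (p s : ℕ) (h : ℕ → ℕ) (n : ℕ) : ℕ :=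
  (Nat.digits s n).foldr (fun d acc => h d + p * acc) 0

/-- `b n = a n / n ^ (log_s p)`. -/
noncomputable def cantorB (p s : ℕ) (h : ℕ → ℕ) (n : ℕ) : ℝ :=
  (cantorInt p s h n : ℝ) / (n : ℝ) ^ Real.logb s p

/-- `a(x) = a_⌊x⌋`. -/
noncomputable def cantorA (p s : ℕ) (h : ℕ → ℕ) (x : ℝ) : ℝ :=
  (cantorInt p s h ⌊x⌋₊ : ℝ)

/-!
Write `L = log_s p` and `n_k = ⌊s^k x⌋`. Since `n_k` is `n_{k+1}` with its last `s`-ary digit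
removed, `a(n_{k+1}) = h(d) + p a(n_k)` with `h(d) < p`, so the sequence `a(n_k) / p^k` moves by
less than `p^{-k}` at step `k`; it is Cauchy and converges. As `(s^k x)^L = p^k x^L`, this gives
the limit `λ(x)`, and `λ(s x) = λ(x)` because passing from `x` to `s x` shifts the sequence by
one. Finally `a(s^k x)/(s^k x)^L` and `b_{n_k}` differ by the factor `(s^k x / n_k)^L → 1`,
and every `b_n` lies in `[m, M]`.
-/

theorem rpow_logb_pow {b x : ℝ} (hb : 0 < b) (hb1 : b ≠ 1) (hx : 0 < x) (k : ℕ) :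
    (b ^ k) ^ logb b x = x ^ k := by
  rw [← rpow_pow_comm hb.le, rpow_logb hb hb1 hx]

theorem Nat.floor_pow_succ_mul_div {s : ℕ} (hs : s ≠ 0) (x : ℝ) (k : ℕ) :
    ⌊(s : ℝ) ^ (k + 1) * x⌋₊ / s = ⌊(s : ℝ) ^ k * x⌋₊ := by
  rw [← Nat.floor_div_natCast]
  congr 1
  field_simp
  ring

section CantorInt

variable {p s : ℕ} {h : ℕ → ℕ}

theorem cantorInt_eq_ofDigits (n : ℕ) :
    cantorInt p s h n = Nat.ofDigits p ((Nat.digits s n).map h) := by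
  rw [cantorInt, Nat.ofDigits_eq_foldr, List.foldr_map]
  rfl

theorem cantorInt_of_pos (hs : 1 < s) {n : ℕ} (hn : 0 < n) :
    cantorInt p s h n = h (n % s) + p * cantorInt p s h (n / s) := by
  rw [cantorInt, Nat.digits_def' hs hn]
  rfl

theorem cantorInt_lt_pow_length (hs : 1 < s) (hp : 1 < p) (hrange : ∀ i < s, h i < p)
    (n : ℕ) : cantorInt p s h n < p ^ (Nat.digits s n).length := by
  rw [cantorInt_eq_ofDigits, ← List.length_map h]
  refine Nat.ofDigits_lt_base_pow_length hp ?_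
  rintro _ hmem
  obtain ⟨d, hd, rfl⟩ := List.mem_map.1 hmem
  exact hrange d (Nat.digits_lt_base hs hd)

theorem cantorB_nonneg (n : ℕ) : 0 ≤ cantorB p s h n := by
  unfold cantorB
  positivity

theorem cantorB_le (hs : 1 < s) (hp : 1 < p) (hrange : ∀ i < s, h i < p) {n : ℕ}
    (hn : n ≠ 0) : cantorB p s h n ≤ p := by
  have hs0 : (0 : ℝ) < s := by positivity
  have hs1 : (s : ℝ) ≠ 1 := by exact_mod_cast hs.ne'
  have hp1 : (1 : ℝ) < p := by exact_mod_cast hp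
  have ha : (cantorInt p s h n : ℝ) < p * p ^ Nat.log s n := by
    have := cantorInt_lt_pow_length hs hp hrange n
    rw [Nat.length_digits s n hs hn, pow_succ'] at this
    exact_mod_cast this
  have hlog : (p : ℝ) ^ Nat.log s n ≤ (n : ℝ) ^ logb s p := by
    rw [← rpow_logb_pow hs0 hs1 (by positivity)]
    exact rpow_le_rpow (by positivity) (by exact_mod_cast Nat.pow_log_le_self s hn)
      (logb_nonneg (by exact_mod_cast hs) hp1.le)
  rw [cantorB, div_le_iff₀ (by positivity)]
  nlinarith

theorem cantorB_mem_Icc_sInf_sSup (hs : 1 < s) (hp : 1 < p) (hrange : ∀ i < s, h i < p)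
    {n : ℕ} (hn : 1 ≤ n) :
    cantorB p s h n ∈ Icc (sInf {x | ∃ n : ℕ, 1 ≤ n ∧ cantorB p s h n = x})
      (sSup {x | ∃ n : ℕ, 1 ≤ n ∧ cantorB p s h n = x}) := by
  have hmem : cantorB p s h n ∈ {x | ∃ n : ℕ, 1 ≤ n ∧ cantorB p s h n = x} := ⟨n, hn, rfl⟩
  refine ⟨csInf_le ⟨0, ?_⟩ hmem, le_csSup ⟨p, ?_⟩ hmem⟩
  · rintro _ ⟨k, -, rfl⟩
    exact cantorB_nonneg k
  · rintro _ ⟨k, hk, rfl⟩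
    exact cantorB_le hs hp hrange (by omega)

theorem dist_cantorInt_div_pow_succ_le (hs : 1 < s) (hrange : ∀ i < s, h i < p)
    {n : ℕ → ℕ} (hn : ∀ k, n (k + 1) / s = n k) (k : ℕ) :
    dist ((cantorInt p s h (n k) : ℝ) / p ^ k) (cantorInt p s h (n (k + 1)) / p ^ (k + 1))
      ≤ 1 * (p : ℝ)⁻¹ ^ k := by
  rcases Nat.eq_zero_or_pos (n (k + 1)) with h0 | hpos
  · have hk : n k = 0 := by rw [← hn k, h0, Nat.zero_div]
    simp [h0, hk, cantorInt]
  have hd : (h (n (k + 1) % s) : ℝ) < p := by exact_mod_cast hrange _ (Nat.mod_lt _ (by omega))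
  have hp0 : (0 : ℝ) < p := by exact_mod_cast (hrange 0 (by omega)).trans_le' (Nat.zero_le _)
  rw [← hn k, cantorInt_of_pos hs hpos, dist_comm, dist_eq]
  set d := h (n (k + 1) % s)
  set a := cantorInt p s h (n (k + 1) / s)
  have hstep : ((d + p * a : ℕ) : ℝ) / p ^ (k + 1) - a / p ^ k = d / p ^ (k + 1) := by
    push_cast
    field_simp
    ring
  rw [hstep, abs_of_nonneg (by positivity), one_mul, inv_pow, div_le_iff₀ (by positivity),
    pow_succ, ← mul_assoc, inv_mul_cancel₀ (by positivity), one_mul]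
  exact hd.le

theorem cauchySeq_cantorInt_div_pow (hs : 1 < s) (hp : 1 < p) (hrange : ∀ i < s, h i < p)
    {n : ℕ → ℕ} (hn : ∀ k, n (k + 1) / s = n k) :
    CauchySeq fun k => (cantorInt p s h (n k) : ℝ) / p ^ k :=
  cauchySeq_of_le_geometric _ 1 (inv_lt_one_of_one_lt₀ (by exact_mod_cast hp))
    (dist_cantorInt_div_pow_succ_le hs hrange hn)

theorem exists_tendsto_cantorA_pow_mul_div (hs : 1 < s) (hp : 1 < p)
    (hrange : ∀ i < s, h i < p) {x : ℝ} (hx : 0 < x) :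
    ∃ l, Tendsto (fun k : ℕ => cantorA p s h ((s : ℝ) ^ k * x) / ((s : ℝ) ^ k * x) ^ logb s p)
      atTop (𝓝 l) := by
  obtain ⟨l, hl⟩ := cauchySeq_tendsto_of_complete <| cauchySeq_cantorInt_div_pow hs hp hrange
    (n := fun k => ⌊(s : ℝ) ^ k * x⌋₊) (Nat.floor_pow_succ_mul_div (by omega : s ≠ 0) x)
  refine ⟨l / x ^ logb s p, (hl.div_const _).congr fun k => ?_⟩
  rw [cantorA, mul_rpow (by positivity) hx.le,
    rpow_logb_pow (by positivity) (by exact_mod_cast hs.ne') (by positivity), div_div]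

theorem tendsto_cantorB_floor {α : Type*} {l : Filter α} {y : α → ℝ} {c : ℝ}
    (hy : Tendsto y l atTop)
    (hc : Tendsto (fun t => cantorA p s h (y t) / y t ^ logb s p) l (𝓝 c)) :
    Tendsto (fun t => cantorB p s h ⌊y t⌋₊) l (𝓝 c) := by
  have hratio : Tendsto (fun t => (y t / ⌊y t⌋₊) ^ logb s p) l (𝓝 1) := by
    have := ((tendsto_nat_floor_div_atTop.comp hy).inv₀ one_ne_zero).rpow_const
      (p := logb s p) (Or.inl (by simp))
    simpa [Function.comp_def] using this
  have hprod := hc.mul hratio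
  rw [mul_one] at hprod
  refine hprod.congr' ?_
  filter_upwards [hy.eventually_ge_atTop 1] with t ht
  have hfloor : (0 : ℝ) < ⌊y t⌋₊ := by exact_mod_cast Nat.one_le_floor_iff _ |>.2 ht
  rw [cantorB, cantorA, div_rpow (by positivity) hfloor.le]
  field_simp

end CantorInt

theorem stmt7_general (p s : ℕ) (h : ℕ → ℕ) (hs : 2 ≤ s) (hp : s < p)
    (hrange : ∀ i, i < s → h i < p)
    (m M : ℝ) (hm : m = sInf {x : ℝ | ∃ n : ℕ, 1 ≤ n ∧ cantorB p s h n = x})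
    (hM : M = sSup {x : ℝ | ∃ n : ℕ, 1 ≤ n ∧ cantorB p s h n = x}) :
    ∃ lam : ℝ → ℝ, ∀ x : ℝ, 0 < x →
      Tendsto (fun k : ℕ => cantorA p s h ((s : ℝ) ^ k * x) / ((s : ℝ) ^ k * x) ^ Real.logb s p)
        atTop (nhds (lam x)) ∧
      lam ((s : ℝ) * x) = lam x ∧ lam x ∈ Set.Icc m M := by
  have hs1 : 1 < s := by omega
  have hp1 : 1 < p := by omega
  choose! lam hlam using fun x (hx : 0 < x) =>
    exists_tendsto_cantorA_pow_mul_div hs1 hp1 hrange hx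
  refine ⟨lam, fun x hx => ⟨hlam x hx, ?_, ?_⟩⟩
  · have hshift := (hlam x hx).comp (tendsto_add_atTop_nat 1)
    simp only [Function.comp_def, pow_succ, mul_assoc] at hshift
    exact tendsto_nhds_unique (hlam _ (by positivity)) hshift
  · have hy : Tendsto (fun k : ℕ => (s : ℝ) ^ k * x) atTop atTop :=
      (tendsto_pow_atTop_atTop_of_one_lt (by exact_mod_cast hs1)).atTop_mul_const hx
    subst hm hM
    refine isClosed_Icc.mem_of_tendsto (tendsto_cantorB_floor hy (hlam x hx)) ?_
    filter_upwards [hy.eventually_ge_atTop 1] with k hk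
    exact cantorB_mem_Icc_sInf_sSup hs1 hp1 hrange ((Nat.one_le_floor_iff _).2 hk)

theorem stmt7 (p s : ℕ) (h : ℕ → ℕ) (hs : 2 ≤ s) (hp : s < p)
    (hmono : ∀ i j, i < j → j < s → h i < h j)
    (hrange : ∀ i, i < s → h i < p)
    (m M : ℝ) (hm : m = sInf {x : ℝ | ∃ n : ℕ, 1 ≤ n ∧ cantorB p s h n = x})
    (hM : M = sSup {x : ℝ | ∃ n : ℕ, 1 ≤ n ∧ cantorB p s h n = x}) :
    ∃ lam : ℝ → ℝ, ∀ x : ℝ, 0 < x →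
      Tendsto (fun k : ℕ => cantorA p s h ((s : ℝ) ^ k * x) / ((s : ℝ) ^ k * x) ^ Real.logb s p)
        atTop (nhds (lam x)) ∧
      lam ((s : ℝ) * x) = lam x ∧ lam x ∈ Set.Icc m M :=
  stmt7_general p s h hs hp hrange m M hm hM
end

section
/- For every α ∈ [m, M], the logarithmic distribution function of (b_n) exists at α and equals L(α) = (1/ln s) ∫_{E_α} (1/x) dx, where E_α = {x ∈ [1/s, 1) : λ(x) ≤ α}; that is, lim_{x→∞} (1/ln x) Σ_{1 ≤ n ≤ x, b_n ≤ α} 1/n = (1/ln s) ∫_{E_α} x^{-1} dx (Lebesgue integral). -/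
open Real Filter Set MeasureTheory Topology
open scoped Classical ENNReal

/-!
Write `θ = log_s p` and `w n = [b_n ≤ α] / n`. The block sum `∑_{s^k ≤ n < s^(k+1)} w n` is the
integral of `s^(k+1) w(⌊s^(k+1) x⌋)` over `[1/s, 1)`. This integrand is bounded by `2 s` and, since
`b_⌊s^k x⌋ → λ(x)`, tends to `[λ(x) ≤ α] / x` wherever `λ(x) ≠ α`; so dominated convergence gives
the limit of the block sums once the level set `{λ = α}` is null. For that, `a(⌊s^k x⌋) / p^k`
increases to `λ(x) x^θ` with error at most `p^(-k)`: on each of the `s^k` intervals where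
`⌊s^k x⌋` is constant, `α x^θ` varies by at most `p^(-k)` on the level set, which is therefore
covered by intervals of total length `O((s/p)^k)`. The logarithmic mean of the partial sums is
then a Cesàro mean of the block sums. Finally `α ≥ m ≥ 1/p > 0` because `a_n ≥ p^⌊log_s n⌋`.
-/

lemma rpow_sub_one_mul_sub_le_rpow_sub_rpow {θ u v : ℝ} (hθ : 1 ≤ θ) (hu : 0 < u) (huv : u ≤ v) :
    u ^ (θ - 1) * (v - u) ≤ v ^ θ - u ^ θ := by
  have hbern := one_add_mul_self_le_rpow_one_add (s := v / u - 1)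
    (by linarith [div_nonneg (hu.le.trans huv) hu.le]) hθ
  rw [add_sub_cancel, Real.div_rpow (hu.le.trans huv) hu.le, le_div_iff₀ (by positivity)] at hbern
  have hkey : (1 + θ * (v / u - 1)) * u ^ θ = u ^ θ + θ * (u ^ (θ - 1) * (v - u)) := by
    rw [Real.rpow_sub_one hu.ne']; field_simp
  have hnonneg : 0 ≤ u ^ (θ - 1) * (v - u) := mul_nonneg (by positivity) (by linarith)
  nlinarith

lemma rpow_mul_abs_sub_le_abs_rpow_sub {θ c x y : ℝ} (hθ : 1 ≤ θ) (hc : 0 < c) (hx : c ≤ x)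
    (hy : c ≤ y) : c ^ (θ - 1) * |x - y| ≤ |x ^ θ - y ^ θ| := by
  wlog hxy : x ≤ y generalizing x y
  · rw [abs_sub_comm, abs_sub_comm (x ^ θ)]
    exact this hy hx (le_of_not_ge hxy)
  rw [abs_sub_comm, abs_of_nonneg (by linarith), abs_sub_comm,
    abs_of_nonneg (by linarith [Real.rpow_le_rpow (hc.le.trans hx) hxy (by linarith : 0 ≤ θ)])]
  calc c ^ (θ - 1) * (y - x) ≤ x ^ (θ - 1) * (y - x) := by gcongr
    _ ≤ y ^ θ - x ^ θ := rpow_sub_one_mul_sub_le_rpow_sub_rpow hθ (hc.trans_le hx) hxy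

lemma one_le_logb_of_lt {p s : ℕ} (hs : 1 < s) (hp : s < p) : 1 ≤ Real.logb s p := by
  rw [Real.le_logb_iff_rpow_le (by exact_mod_cast hs) (by exact_mod_cast (by omega : 0 < p)),
    Real.rpow_one]
  exact_mod_cast hp.le

lemma natCast_pow_rpow_logb {p s : ℕ} (hs : 1 < s) (hp : 0 < p) (k : ℕ) :
    ((s : ℝ) ^ k) ^ Real.logb s p = (p : ℝ) ^ k := by
  rw [← Real.rpow_pow_comm (Nat.cast_nonneg s),
    Real.rpow_logb (by positivity) (by exact_mod_cast hs.ne') (by exact_mod_cast hp)]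

lemma natFloor_pow_succ_mul_div {s : ℕ} (hs : 0 < s) (x : ℝ) (k : ℕ) :
    ⌊(s : ℝ) ^ (k + 1) * x⌋₊ / s = ⌊(s : ℝ) ^ k * x⌋₊ := by
  rw [← Nat.floor_div_natCast, pow_succ, mul_right_comm, mul_div_cancel_right₀ _ (by positivity)]

lemma intervalIntegral_comp_natFloor_unit (w : ℕ → ℝ) (n : ℕ) :
    IntervalIntegrable (fun y : ℝ => w ⌊y⌋₊) volume n (n + 1) ∧
      ∫ y in (n : ℝ)..(n + 1), w ⌊y⌋₊ = w n := by
  have hconst : EqOn (fun y : ℝ => w ⌊y⌋₊) (fun _ => w n) (Ioo (n : ℝ) (n + 1)) := fun y hy => by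
    simp only [(Nat.floor_eq_iff (n.cast_nonneg.trans hy.1.le)).2 ⟨hy.1.le, hy.2⟩]
  have hle : (n : ℝ) ≤ n + 1 := by linarith
  constructor
  · rw [intervalIntegrable_iff_integrableOn_Ioo_of_le hle]
    exact (integrableOn_const (by simp)).congr_fun hconst.symm measurableSet_Ioo
  · rw [intervalIntegral.integral_of_le hle, integral_Ioc_eq_integral_Ioo,
      setIntegral_congr_fun measurableSet_Ioo hconst, setIntegral_const]
    simp

lemma intervalIntegral_comp_natFloor (w : ℕ → ℝ) {a b : ℕ} (hab : a ≤ b) :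
    ∫ y in (a : ℝ)..b, w ⌊y⌋₊ = ∑ n ∈ Finset.Ico a b, w n := by
  rw [← intervalIntegral.sum_integral_adjacent_intervals_Ico (a := Nat.cast) hab]
  · refine Finset.sum_congr rfl fun n _ => ?_
    rw [Nat.cast_succ]
    exact (intervalIntegral_comp_natFloor_unit w n).2
  · intro n _
    rw [Nat.cast_succ]
    exact (intervalIntegral_comp_natFloor_unit w n).1

lemma setIntegral_Ico_mul_comp_natFloor_mul (w : ℕ → ℝ) {a b N : ℕ} (hN : 0 < N) (hab : a ≤ b) :
    ∫ x in Ico ((a : ℝ) / N) (b / N), N * w ⌊N * x⌋₊ = ∑ n ∈ Finset.Ico a b, w n := by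
  have hN' : (0 : ℝ) < N := by exact_mod_cast hN
  rw [integral_Ico_eq_integral_Ioo, ← integral_Ioc_eq_integral_Ioo,
    ← intervalIntegral.integral_of_le (by gcongr),
    intervalIntegral.integral_const_mul, ← smul_eq_mul,
    intervalIntegral.smul_integral_comp_mul_left (fun y => w ⌊y⌋₊),
    mul_div_cancel₀ _ hN'.ne', mul_div_cancel₀ _ hN'.ne', intervalIntegral_comp_natFloor w hab]

lemma sum_Ico_pow_eq_setIntegral (w : ℕ → ℝ) {s : ℕ} (hs : 0 < s) (k : ℕ) :
    ∑ n ∈ Finset.Ico (s ^ k) (s ^ (k + 1)), w n =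
      ∫ x in Ico ((s : ℝ)⁻¹) 1, (s : ℝ) ^ (k + 1) * w ⌊(s : ℝ) ^ (k + 1) * x⌋₊ := by
  rw [← setIntegral_Ico_mul_comp_natFloor_mul w (pow_pos hs (k + 1))
    (Nat.pow_le_pow_right hs k.le_succ)]
  have hpow : (s : ℝ) ^ k / (s : ℝ) ^ (k + 1) = (s : ℝ)⁻¹ := by
    rw [pow_succ]; field_simp
  push_cast
  rw [hpow, div_self (by positivity)]

lemma tendsto_div_natFloor_rpow {ι : Type*} {l : Filter ι} {y : ι → ℝ} (hy : Tendsto y l atTop)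
    {g : ℕ → ℝ} {θ L : ℝ} (hg : Tendsto (fun i => g ⌊y i⌋₊ / y i ^ θ) l (𝓝 L)) :
    Tendsto (fun i => g ⌊y i⌋₊ / (⌊y i⌋₊ : ℝ) ^ θ) l (𝓝 L) := by
  have hinv := (tendsto_nat_floor_div_atTop.comp hy).inv₀ one_ne_zero
  rw [inv_one] at hinv
  have hratio := hinv.rpow_const (p := θ) (Or.inl one_ne_zero)
  rw [Real.one_rpow] at hratio
  refine (mul_one L ▸ hg.mul hratio).congr' ?_
  filter_upwards [hy.eventually_ge_atTop 1] with i hi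
  have hfloor : (0 : ℝ) < ⌊y i⌋₊ := by exact_mod_cast Nat.floor_pos.2 hi
  simp only [Function.comp_apply, inv_div]
  rw [Real.div_rpow (by linarith) hfloor.le]
  field_simp [(Real.rpow_pos_of_pos (by linarith : 0 < y i) θ).ne']

lemma tendsto_div_natFloor_mul {ι : Type*} {l : Filter ι} {N : ι → ℝ} (hN : Tendsto N l atTop)
    {x : ℝ} (hx : 0 < x) : Tendsto (fun i => N i / ⌊N i * x⌋₊) l (𝓝 x⁻¹) := by
  have hinv := (tendsto_nat_floor_div_atTop.comp (hN.atTop_mul_const hx)).inv₀ one_ne_zero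
  rw [inv_one] at hinv
  refine (mul_one x⁻¹ ▸ hinv.const_mul x⁻¹).congr' ?_
  filter_upwards [hN.eventually_gt_atTop 0] with i hi
  simp only [Function.comp_apply, inv_div]
  field_simp

lemma div_natFloor_mul_le (N : ℝ) {x : ℝ} (hx : 0 < x) : N / ⌊N * x⌋₊ ≤ 2 / x := by
  rcases (⌊N * x⌋₊).eq_zero_or_pos with h0 | hpos
  · rw [h0, Nat.cast_zero, div_zero]; positivity
  · have hn : (1 : ℝ) ≤ ⌊N * x⌋₊ := by exact_mod_cast hpos
    rw [div_le_div_iff₀ (by linarith) hx]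
    linarith [Nat.lt_floor_add_one (N * x)]

lemma tendsto_mul_ite_natFloor_mul {ι : Type*} {l : Filter ι} {N : ι → ℝ} (hN : Tendsto N l atTop)
    {b : ℕ → ℝ} {x L α : ℝ} (hx : 0 < x) (hb : Tendsto (fun i => b ⌊N i * x⌋₊) l (𝓝 L))
    (hLα : L ≠ α) :
    Tendsto (fun i => N i * if b ⌊N i * x⌋₊ ≤ α then (1 : ℝ) / ⌊N i * x⌋₊ else 0) l
      (𝓝 (if L ≤ α then 1 / x else 0)) := by
  rcases hLα.lt_or_gt with hlt | hgt
  · rw [if_pos hlt.le, one_div]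
    refine (tendsto_div_natFloor_mul hN hx).congr' ?_
    filter_upwards [hb.eventually_lt_const hlt] with i hi
    rw [if_pos hi.le, mul_one_div]
  · rw [if_neg hgt.not_ge]
    refine tendsto_const_nhds.congr' ?_
    filter_upwards [hb.eventually_const_lt hgt] with i hi
    rw [if_neg hi.not_ge, mul_zero]

lemma sum_Ico_one_pow_eq_sum_blocks (w : ℕ → ℝ) {s : ℕ} (hs : 0 < s) (K : ℕ) :
    ∑ n ∈ Finset.Ico 1 (s ^ K), w n =
      ∑ k ∈ Finset.range K, ∑ n ∈ Finset.Ico (s ^ k) (s ^ (k + 1)), w n := by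
  induction K with
  | zero => simp
  | succ K ih =>
    rw [Finset.sum_range_succ, ← ih, Finset.sum_Ico_consecutive _ (Nat.one_le_pow _ _ hs)
      (Nat.pow_le_pow_right hs K.le_succ)]

lemma tendsto_inv_add_one_mul_of_tendsto_inv_mul {C : ℕ → ℝ} {I : ℝ}
    (hC : Tendsto (fun K : ℕ => (K : ℝ)⁻¹ * C K) atTop (𝓝 I)) :
    Tendsto (fun K : ℕ => ((K : ℝ) + 1)⁻¹ * C K) atTop (𝓝 I) := by
  have := (tendsto_natCast_div_add_atTop (1 : ℝ)).mul hC
  rw [one_mul] at this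
  refine this.congr' ?_
  filter_upwards [eventually_ge_atTop 1] with K hK
  have : (0 : ℝ) < K := by exact_mod_cast hK
  field_simp

lemma tendsto_inv_mul_succ_of_tendsto_inv_mul {C : ℕ → ℝ} {I : ℝ}
    (hC : Tendsto (fun K : ℕ => (K : ℝ)⁻¹ * C K) atTop (𝓝 I)) :
    Tendsto (fun K : ℕ => (K : ℝ)⁻¹ * C (K + 1)) atTop (𝓝 I) := by
  have := ((tendsto_natCast_div_add_atTop (1 : ℝ)).inv₀ one_ne_zero).mul
    (hC.comp (tendsto_add_atTop_nat 1))
  rw [inv_one, one_mul] at this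
  refine this.congr' ?_
  filter_upwards [eventually_ge_atTop 1] with K hK
  have : (0 : ℝ) < K := by exact_mod_cast hK
  simp only [Function.comp_apply]
  push_cast
  field_simp

lemma log_mul_natLog_floor_le_log {s : ℕ} (hs : 1 < s) {x : ℝ} (hx : 1 ≤ x) :
    Real.log s * Nat.log s ⌊x⌋₊ ≤ Real.log x := by
  rw [mul_comm, ← Real.log_pow]
  refine Real.log_le_log (by positivity) ?_
  calc (s : ℝ) ^ Nat.log s ⌊x⌋₊ ≤ ⌊x⌋₊ := by
        exact_mod_cast Nat.pow_log_le_self s (Nat.floor_pos.2 hx).ne'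
    _ ≤ x := Nat.floor_le (by linarith)

lemma log_le_log_mul_natLog_floor_add_one {s : ℕ} (hs : 1 < s) {x : ℝ} (hx : 0 < x) :
    Real.log x ≤ Real.log s * (Nat.log s ⌊x⌋₊ + 1) := by
  rw [mul_comm, ← Nat.cast_succ, ← Real.log_pow]
  refine Real.log_le_log hx ?_
  calc x ≤ ⌊x⌋₊ + 1 := (Nat.lt_floor_add_one x).le
    _ ≤ (s : ℝ) ^ (Nat.log s ⌊x⌋₊ + 1) := by exact_mod_cast Nat.lt_pow_succ_log_self hs _

lemma tendsto_inv_log_mul_sum_of_tendsto_blockSum {s : ℕ} (hs : 1 < s) {w : ℕ → ℝ}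
    (hw : ∀ n, 0 ≤ w n) {I : ℝ}
    (hI : Tendsto (fun k => ∑ n ∈ Finset.Ico (s ^ k) (s ^ (k + 1)), w n) atTop (𝓝 I)) :
    Tendsto (fun x : ℝ => (Real.log x)⁻¹ * ∑ n ∈ Finset.Icc 1 ⌊x⌋₊, w n) atTop
      (𝓝 ((Real.log s)⁻¹ * I)) := by
  set C : ℕ → ℝ := fun K => ∑ n ∈ Finset.Ico 1 (s ^ K), w n
  have hC : Tendsto (fun K : ℕ => (K : ℝ)⁻¹ * C K) atTop (𝓝 I) := by
    simpa only [C, sum_Ico_one_pow_eq_sum_blocks w (by omega : 0 < s)] using hI.cesaro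
  have hK : Tendsto (fun x : ℝ => Nat.log s ⌊x⌋₊) atTop atTop := by
    refine tendsto_atTop.2 fun N => ?_
    filter_upwards [eventually_ge_atTop ((s : ℝ) ^ N)] with x hx
    exact Nat.le_log_of_pow_le hs (Nat.le_floor (by exact_mod_cast hx))
  -- Sandwich between the partial sums up to `s ^ K` and `s ^ (K + 1)`, `K = ⌊log_s x⌋`.
  refine tendsto_of_tendsto_of_tendsto_of_le_of_le'
    (((tendsto_inv_add_one_mul_of_tendsto_inv_mul hC).const_mul (Real.log s)⁻¹).comp hK)
    (((tendsto_inv_mul_succ_of_tendsto_inv_mul hC).const_mul (Real.log s)⁻¹).comp hK) ?_ ?_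
  all_goals
    filter_upwards [eventually_ge_atTop (s : ℝ)] with x hx
    simp only [Function.comp_apply, C, ← mul_assoc, ← mul_inv]
    have hx1 : (1 : ℝ) ≤ x := le_trans (by exact_mod_cast hs.le) hx
    have hfloor : s ≤ ⌊x⌋₊ := Nat.le_floor (by exact_mod_cast hx)
    have hlog_low := log_mul_natLog_floor_le_log hs hx1
    have hlog_high := log_le_log_mul_natLog_floor_add_one hs (x := x) (by linarith)
    have hlow : s ^ Nat.log s ⌊x⌋₊ ≤ ⌊x⌋₊ := Nat.pow_log_le_self s (by omega)
    have hhigh : ⌊x⌋₊ < s ^ (Nat.log s ⌊x⌋₊ + 1) := Nat.lt_pow_succ_log_self hs _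
    have hK1 : 1 ≤ Nat.log s ⌊x⌋₊ := Nat.le_log_of_pow_le hs (by simpa using hfloor)
    have hKlog : 0 < Real.log s * Nat.log s ⌊x⌋₊ :=
      mul_pos (Real.log_pos (by exact_mod_cast hs)) (by exact_mod_cast hK1)
  · refine mul_le_mul (inv_anti₀ (by linarith) hlog_high)
      (Finset.sum_le_sum_of_subset_of_nonneg (fun n hn => ?_) fun n _ _ => hw n)
      (Finset.sum_nonneg fun n _ => hw n) (inv_nonneg.2 (by linarith))
    simp only [Finset.mem_Ico, Finset.mem_Icc] at hn ⊢
    omega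
  · refine mul_le_mul (inv_anti₀ hKlog hlog_low)
      (Finset.sum_le_sum_of_subset_of_nonneg (fun n hn => ?_) fun n _ _ => hw n)
      (Finset.sum_nonneg fun n _ => hw n) (inv_nonneg.2 hKlog.le)
    simp only [Finset.mem_Ico, Finset.mem_Icc] at hn ⊢
    omega

namespace CantorInteger

variable {p s : ℕ} {h : ℕ → ℕ}

variable (p s h) in
def IsCantorLambda (lam : ℝ → ℝ) : Prop :=
  ∀ x : ℝ, 0 < x →
    Tendsto (fun k : ℕ => cantorA p s h ((s : ℝ) ^ k * x) / ((s : ℝ) ^ k * x) ^ Real.logb s p)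
      atTop (𝓝 (lam x))

@[simp]
lemma cantorInt_zero : cantorInt p s h 0 = 0 := by simp [cantorInt]

lemma cantorInt_of_pos (hs : 1 < s) {n : ℕ} (hn : 0 < n) :
    cantorInt p s h n = h (n % s) + p * cantorInt p s h (n / s) := by
  simp [cantorInt, Nat.digits_def' hs hn]

lemma mul_cantorInt_div_le (hs : 1 < s) (n : ℕ) :
    p * cantorInt p s h (n / s) ≤ cantorInt p s h n := by
  rcases n.eq_zero_or_pos with rfl | hn
  · simp
  · rw [cantorInt_of_pos hs hn]; omega

lemma cantorInt_lt_mul_div_add (hs : 1 < s) (hrange : ∀ i, i < s → h i < p) (n : ℕ) :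
    cantorInt p s h n < p * cantorInt p s h (n / s) + p := by
  rcases n.eq_zero_or_pos with rfl | hn
  · simpa using (Nat.zero_le _).trans_lt (hrange 0 (by omega))
  · rw [cantorInt_of_pos hs hn]
    have := hrange (n % s) (Nat.mod_lt n (by omega))
    omega

lemma pow_log_le_cantorInt (hs : 1 < s) (hpos : ∀ d, 0 < d → d < s → 0 < h d) {n : ℕ}
    (hn : 0 < n) : p ^ Nat.log s n ≤ cantorInt p s h n := by
  induction n using Nat.strong_induction_on with
  | _ n ih =>
    rcases lt_or_ge n s with hns | hsn
    · rw [Nat.log_of_lt hns, pow_zero, cantorInt_of_pos hs hn, Nat.mod_eq_of_lt hns]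
      have := hpos n hn hns
      omega
    · have hdiv : 0 < n / s := Nat.div_pos hsn (by omega)
      calc p ^ Nat.log s n = p * p ^ Nat.log s (n / s) := by
            rw [Nat.log_div_base, ← pow_succ', Nat.sub_add_cancel (Nat.log_pos hs hsn)]
        _ ≤ p * cantorInt p s h (n / s) :=
            Nat.mul_le_mul_left p (ih _ (Nat.div_lt_self hn hs) hdiv)
        _ ≤ cantorInt p s h n := mul_cantorInt_div_le hs n

lemma inv_le_cantorB (hs : 1 < s) (hp : 0 < p) (hpos : ∀ d, 0 < d → d < s → 0 < h d)
    {n : ℕ} (hn : 0 < n) : (p : ℝ)⁻¹ ≤ cantorB p s h n := by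
  set K := Nat.log s n
  have hθ : 0 ≤ Real.logb s p :=
    Real.logb_nonneg (by exact_mod_cast hs) (by exact_mod_cast hp)
  have hnum : (p : ℝ) ^ K ≤ cantorInt p s h n := by
    exact_mod_cast pow_log_le_cantorInt hs hpos hn
  have hden : (n : ℝ) ^ Real.logb s p ≤ (p : ℝ) ^ (K + 1) := by
    rw [← natCast_pow_rpow_logb hs hp]
    gcongr
    exact_mod_cast (Nat.lt_pow_succ_log_self hs n).le
  rw [cantorB, le_div_iff₀ (by positivity)]
  calc (p : ℝ)⁻¹ * (n : ℝ) ^ Real.logb s p ≤ (p : ℝ)⁻¹ * (p : ℝ) ^ (K + 1) := by gcongr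
    _ = (p : ℝ) ^ K := by rw [pow_succ']; field_simp
    _ ≤ _ := hnum

variable (p s h) in
noncomputable def cantorApprox (x : ℝ) (k : ℕ) : ℝ :=
  (cantorInt p s h ⌊(s : ℝ) ^ k * x⌋₊ : ℝ) / (p : ℝ) ^ k

lemma monotone_cantorApprox (hs : 1 < s) (hp : 0 < p) (x : ℝ) : Monotone (cantorApprox p s h x) := by
  refine monotone_nat_of_le_succ fun k => ?_
  have key : (p : ℝ) * cantorInt p s h ⌊(s : ℝ) ^ k * x⌋₊ ≤
      cantorInt p s h ⌊(s : ℝ) ^ (k + 1) * x⌋₊ := by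
    have := mul_cantorInt_div_le (p := p) (h := h) hs ⌊(s : ℝ) ^ (k + 1) * x⌋₊
    rw [natFloor_pow_succ_mul_div (by omega)] at this
    exact_mod_cast this
  rw [cantorApprox, cantorApprox, div_le_div_iff₀ (by positivity) (by positivity),
    pow_succ (p : ℝ) k]
  nlinarith [pow_pos (Nat.cast_pos.mpr hp : (0 : ℝ) < p) k]

lemma antitone_cantorApprox_add_inv_pow (hs : 1 < s) (hrange : ∀ i, i < s → h i < p) (x : ℝ) :
    Antitone fun k => cantorApprox p s h x k + ((p : ℝ) ^ k)⁻¹ := by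
  have hp : (0 : ℝ) < p := by exact_mod_cast (Nat.zero_le _).trans_lt (hrange 0 (by omega))
  refine antitone_nat_of_succ_le fun k => ?_
  have key : (cantorInt p s h ⌊(s : ℝ) ^ (k + 1) * x⌋₊ : ℝ) + 1 ≤
      p * cantorInt p s h ⌊(s : ℝ) ^ k * x⌋₊ + p := by
    have := cantorInt_lt_mul_div_add hs hrange ⌊(s : ℝ) ^ (k + 1) * x⌋₊
    rw [natFloor_pow_succ_mul_div (by omega)] at this
    exact_mod_cast this
  have hsum (j : ℕ) : cantorApprox p s h x j + ((p : ℝ) ^ j)⁻¹ =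
      ((cantorInt p s h ⌊(s : ℝ) ^ j * x⌋₊ : ℝ) + 1) / (p : ℝ) ^ j := by
    rw [cantorApprox, add_div, one_div]
  rw [hsum, hsum, div_le_div_iff₀ (by positivity) (by positivity), pow_succ (p : ℝ) k]
  nlinarith [pow_pos hp k]

lemma cantorApprox_le_le_of_tendsto (hs : 1 < s) (hrange : ∀ i, i < s → h i < p) {x l : ℝ}
    (hl : Tendsto (cantorApprox p s h x) atTop (𝓝 l)) (k : ℕ) :
    cantorApprox p s h x k ≤ l ∧ l ≤ cantorApprox p s h x k + ((p : ℝ) ^ k)⁻¹ := by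
  have hp : 0 < p := (Nat.zero_le _).trans_lt (hrange 0 (by omega))
  refine ⟨(monotone_cantorApprox hs hp x).ge_of_tendsto hl k, le_of_tendsto hl ?_⟩
  filter_upwards [eventually_ge_atTop k] with j hkj
  calc cantorApprox p s h x j
      ≤ cantorApprox p s h x j + ((p : ℝ) ^ j)⁻¹ := le_add_of_nonneg_right (by positivity)
    _ ≤ cantorApprox p s h x k + ((p : ℝ) ^ k)⁻¹ := antitone_cantorApprox_add_inv_pow hs hrange x hkj

lemma tendsto_cantorApprox (hs : 1 < s) (hp : 0 < p) {x L : ℝ} (hx : 0 < x)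
    (hL : Tendsto (fun k : ℕ => cantorA p s h ((s : ℝ) ^ k * x) / ((s : ℝ) ^ k * x) ^ Real.logb s p)
      atTop (𝓝 L)) :
    Tendsto (cantorApprox p s h x) atTop (𝓝 (L * x ^ Real.logb s p)) := by
  refine (hL.mul_const _).congr fun k => ?_
  have hxθ : 0 < x ^ Real.logb s p := Real.rpow_pos_of_pos hx _
  rw [cantorA, cantorApprox, Real.mul_rpow (by positivity) hx.le, natCast_pow_rpow_logb hs hp]
  field_simp

lemma ediam_setOf_eq_inter_natFloor_eq_le (hs : 1 < s) (hp : s < p)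
    (hrange : ∀ i, i < s → h i < p) {lam : ℝ → ℝ} (hlam : IsCantorLambda p s h lam) {α : ℝ}
    (hα : 0 < α) (k n : ℕ) :
    Metric.ediam ({x : ℝ | x ∈ Ico ((s : ℝ)⁻¹) 1 ∧ lam x = α} ∩ {x | ⌊(s : ℝ) ^ k * x⌋₊ = n}) ≤
      ENNReal.ofReal (((p : ℝ) ^ k)⁻¹ / (α * ((s : ℝ)⁻¹) ^ (Real.logb s p - 1))) := by
  set θ := Real.logb s p
  have hs0 : (0 : ℝ) < (s : ℝ)⁻¹ := by positivity
  have htrap (x : ℝ) (hx : x ∈ Ico ((s : ℝ)⁻¹) 1 ∧ lam x = α) : cantorApprox p s h x k ≤ α * x ^ θ ∧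
      α * x ^ θ ≤ cantorApprox p s h x k + ((p : ℝ) ^ k)⁻¹ := by
    have hx0 : 0 < x := hs0.trans_le hx.1.1
    rw [← hx.2]
    exact cantorApprox_le_le_of_tendsto hs hrange
      (tendsto_cantorApprox hs (by omega) hx0 (hlam x hx0)) k
  refine Metric.ediam_le fun x hx y hy => ?_
  rw [edist_dist, Real.dist_eq]
  refine ENNReal.ofReal_le_ofReal ((le_div_iff₀ (by positivity)).2 ?_)
  have hu : cantorApprox p s h x k = cantorApprox p s h y k := by
    simp only [cantorApprox, hx.2.out, hy.2.out]
  obtain ⟨hx1, hx2⟩ := htrap x hx.1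
  obtain ⟨hy1, hy2⟩ := htrap y hy.1
  calc |x - y| * (α * ((s : ℝ)⁻¹) ^ (θ - 1)) = α * (((s : ℝ)⁻¹) ^ (θ - 1) * |x - y|) := by ring
    _ ≤ α * |x ^ θ - y ^ θ| := by
        gcongr
        exact rpow_mul_abs_sub_le_abs_rpow_sub (one_le_logb_of_lt hs hp) hs0 hx.1.1.1 hy.1.1.1
    _ = |α * x ^ θ - α * y ^ θ| := by rw [← mul_sub, abs_mul, abs_of_pos hα]
    _ ≤ ((p : ℝ) ^ k)⁻¹ := abs_le.2 ⟨by linarith, by linarith⟩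

lemma volume_setOf_eq_eq_zero (hs : 1 < s) (hp : s < p) (hrange : ∀ i, i < s → h i < p)
    {lam : ℝ → ℝ} (hlam : IsCantorLambda p s h lam) {α : ℝ} (hα : 0 < α) :
    volume {x : ℝ | x ∈ Ico ((s : ℝ)⁻¹) 1 ∧ lam x = α} = 0 := by
  set T := {x : ℝ | x ∈ Ico ((s : ℝ)⁻¹) 1 ∧ lam x = α}
  set c := α * ((s : ℝ)⁻¹) ^ (Real.logb s p - 1)
  have hs0 : (0 : ℝ) < (s : ℝ)⁻¹ := by positivity
  have hp0 : (0 : ℝ) < p := by exact_mod_cast (by omega : 0 < p)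
  have hc : 0 < c := by positivity
  have hcover (k : ℕ) : T ⊆ ⋃ n ∈ Finset.range (s ^ k), T ∩ {x | ⌊(s : ℝ) ^ k * x⌋₊ = n} := by
    intro x hx
    have hx0 : 0 < x := hs0.trans_le hx.1.1
    refine mem_biUnion (x := ⌊(s : ℝ) ^ k * x⌋₊) (Finset.mem_coe.2 (Finset.mem_range.2 ?_))
      ⟨hx, rfl⟩
    rw [Nat.floor_lt (by positivity)]
    push_cast
    nlinarith [hx.1.2, pow_pos (by positivity : (0 : ℝ) < s) k]
  have hbound (k : ℕ) : volume T ≤ ENNReal.ofReal (((s : ℝ) / p) ^ k / c) := by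
    calc volume T ≤ ∑ n ∈ Finset.range (s ^ k), volume (T ∩ {x | ⌊(s : ℝ) ^ k * x⌋₊ = n}) :=
          (measure_mono (hcover k)).trans (measure_biUnion_finset_le _ _)
      _ ≤ ∑ n ∈ Finset.range (s ^ k), ENNReal.ofReal (((p : ℝ) ^ k)⁻¹ / c) :=
          Finset.sum_le_sum fun n _ => (Real.volume_le_diam _).trans
            (ediam_setOf_eq_inter_natFloor_eq_le hs hp hrange hlam hα k n)
      _ = ENNReal.ofReal (((s : ℝ) / p) ^ k / c) := by
          rw [Finset.sum_const, Finset.card_range, nsmul_eq_mul, ← ENNReal.ofReal_natCast,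
            ← ENNReal.ofReal_mul (by positivity)]
          congr 1
          push_cast
          rw [div_pow]
          field_simp
  have hlim : Tendsto (fun k : ℕ => ENNReal.ofReal (((s : ℝ) / p) ^ k / c)) atTop (𝓝 0) := by
    have hratio : (s : ℝ) / p < 1 := (div_lt_one hp0).2 (by exact_mod_cast hp)
    simpa using ENNReal.tendsto_ofReal
      ((tendsto_pow_atTop_nhds_zero_of_lt_one (by positivity) hratio).div_const c)
  exact le_antisymm (ge_of_tendsto' hlim hbound) zero_le

lemma measurableSet_setOf_le (hs : 1 < s) {lam : ℝ → ℝ} (hlam : IsCantorLambda p s h lam) (α : ℝ) :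
    MeasurableSet {x : ℝ | x ∈ Ico ((s : ℝ)⁻¹) 1 ∧ lam x ≤ α} := by
  have hmeas : Measurable ((Ioi 0).indicator lam) := by
    refine measurable_of_tendsto_metrizable (f := fun k x =>
      cantorA p s h ((s : ℝ) ^ k * x) / ((s : ℝ) ^ k * x) ^ Real.logb s p)
      (fun k => ?_) (tendsto_pi_nhds.2 fun x => ?_)
    · have hmul : Measurable fun x : ℝ => (s : ℝ) ^ k * x := measurable_const_mul _
      have hA : Measurable (cantorA p s h) :=
        (measurable_from_top (f := fun n : ℕ => (cantorInt p s h n : ℝ))).comp Nat.measurable_floor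
      exact (hA.comp hmul).div (hmul.pow_const _)
    · by_cases hx : 0 < x
      · simpa [hx] using hlam x hx
      · have hfloor (k : ℕ) : ⌊(s : ℝ) ^ k * x⌋₊ = 0 :=
          Nat.floor_of_nonpos (mul_nonpos_of_nonneg_of_nonpos (by positivity) (not_lt.1 hx))
        simp [hx, cantorA, hfloor]
  have hs0 : (0 : ℝ) < (s : ℝ)⁻¹ := by positivity
  convert measurableSet_Ico.inter (measurableSet_le hmeas measurable_const) using 1
  ext x
  simp only [mem_ofPred_eq, mem_inter_iff]
  refine and_congr_right fun hx => ?_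
  rw [indicator_of_mem (show x ∈ Ioi 0 from hs0.trans_le hx.1)]

lemma tendsto_cantorB_natFloor (hs : 1 < s) {x L : ℝ} (hx : 0 < x)
    (hL : Tendsto (fun k : ℕ => cantorA p s h ((s : ℝ) ^ k * x) / ((s : ℝ) ^ k * x) ^ Real.logb s p)
      atTop (𝓝 L)) :
    Tendsto (fun k : ℕ => cantorB p s h ⌊(s : ℝ) ^ k * x⌋₊) atTop (𝓝 L) :=
  tendsto_div_natFloor_rpow (g := fun n => (cantorInt p s h n : ℝ))
    ((tendsto_pow_atTop_atTop_of_one_lt (by exact_mod_cast hs)).atTop_mul_const hx) hL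

lemma tendsto_blockSum_cantorB (hs : 1 < s) (hp : s < p) (hrange : ∀ i, i < s → h i < p)
    {lam : ℝ → ℝ} (hlam : IsCantorLambda p s h lam) {α : ℝ} (hα : 0 < α) :
    Tendsto (fun k => ∑ n ∈ Finset.Ico (s ^ k) (s ^ (k + 1)),
        if cantorB p s h n ≤ α then (1 : ℝ) / n else 0) atTop
      (𝓝 (∫ y in {x : ℝ | x ∈ Ico ((s : ℝ)⁻¹) 1 ∧ lam x ≤ α}, 1 / y)) := by
  set E := {x : ℝ | x ∈ Ico ((s : ℝ)⁻¹) 1 ∧ lam x ≤ α}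
  set w : ℕ → ℝ := fun n => if cantorB p s h n ≤ α then (1 : ℝ) / n else 0
  have hs0 : (0 : ℝ) < s := by exact_mod_cast (by omega : 0 < s)
  have hw (n : ℕ) : 0 ≤ w n ∧ w n ≤ 1 / n := by
    simp only [w]; split_ifs <;> simp
  have hE : ∫ y in E, 1 / y = ∫ x in Ico ((s : ℝ)⁻¹) 1, E.indicator (fun y => 1 / y) x := by
    rw [setIntegral_indicator (measurableSet_setOf_le hs hlam α),
      inter_eq_right.2 fun x hx => hx.1]
  simp only [sum_Ico_pow_eq_setIntegral w (by omega : 0 < s), hE]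
  refine tendsto_integral_of_dominated_convergence (fun _ => 2 * s) (fun k => ?_)
    (integrableOn_const (by simp)) (fun k => ?_) ?_
  · have hw_meas : Measurable fun x : ℝ => w ⌊x⌋₊ :=
      (measurable_from_top (f := w)).comp Nat.measurable_floor
    exact ((hw_meas.comp (measurable_const_mul _)).const_mul _).aestronglyMeasurable
  · rw [ae_restrict_iff' measurableSet_Ico]
    refine Eventually.of_forall fun x hx => ?_
    have hx0 : 0 < x := (inv_pos.2 hs0).trans_le hx.1
    rw [Real.norm_eq_abs, abs_of_nonneg (mul_nonneg (by positivity) (hw _).1)]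
    calc (s : ℝ) ^ (k + 1) * w ⌊(s : ℝ) ^ (k + 1) * x⌋₊
        ≤ (s : ℝ) ^ (k + 1) / ⌊(s : ℝ) ^ (k + 1) * x⌋₊ := by
          rw [← mul_one_div]; gcongr; exact (hw _).2
      _ ≤ 2 / x := div_natFloor_mul_le _ hx0
      _ ≤ 2 * s := by
          rw [div_le_iff₀ hx0]
          nlinarith [(inv_le_iff_one_le_mul₀ hs0).1 hx.1]
  · have hN : Tendsto (fun k : ℕ => (s : ℝ) ^ (k + 1)) atTop atTop :=
      (tendsto_pow_atTop_atTop_of_one_lt (by exact_mod_cast hs)).comp (tendsto_add_atTop_nat 1)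
    rw [ae_restrict_iff' measurableSet_Ico]
    filter_upwards [measure_eq_zero_iff_ae_notMem.1 (volume_setOf_eq_eq_zero hs hp hrange hlam hα)]
      with x hxα hx
    have hx0 : 0 < x := (inv_pos.2 hs0).trans_le hx.1
    have hind : E.indicator (fun y => 1 / y) x = if lam x ≤ α then 1 / x else 0 := by
      simp only [indicator, E, mem_ofPred_eq, hx, true_and]
    rw [hind]
    exact tendsto_mul_ite_natFloor_mul hN hx0
      ((tendsto_cantorB_natFloor hs hx0 (hlam x hx0)).comp (tendsto_add_atTop_nat 1))
      fun hα' => hxα ⟨hx, hα'⟩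

end CantorInteger

theorem stmt15_general (p s : ℕ) (h : ℕ → ℕ) (hs : 2 ≤ s) (hp : s < p)
    (hmono : ∀ i j, i < j → j < s → h i < h j)
    (hrange : ∀ i, i < s → h i < p)
    (m M : ℝ) (hm : m = sInf {x : ℝ | ∃ n : ℕ, 1 ≤ n ∧ cantorB p s h n = x})
    (lam : ℝ → ℝ)
    (hlam : ∀ x : ℝ, 0 < x →
      Tendsto (fun k : ℕ => cantorA p s h ((s : ℝ) ^ k * x) / ((s : ℝ) ^ k * x) ^ Real.logb s p)
        atTop (nhds (lam x))) :
    ∀ α ∈ Set.Icc m M,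
      Tendsto
        (fun x : ℝ => (Real.log x)⁻¹ *
          ∑ n ∈ Finset.Icc 1 ⌊x⌋₊, if cantorB p s h n ≤ α then (1 : ℝ) / n else 0)
        atTop
        (nhds ((Real.log s)⁻¹ *
          ∫ y in {x : ℝ | x ∈ Set.Ico ((s : ℝ)⁻¹) 1 ∧ lam x ≤ α}, 1 / y)) := by
  intro α hα
  have hpos (d : ℕ) (hd : 0 < d) (hds : d < s) : 0 < h d :=
    (Nat.zero_le _).trans_lt (hmono 0 d hd hds)
  have hm_pos : 0 < m := by
    rw [hm]
    refine (inv_pos.2 (Nat.cast_pos.2 (by omega : 0 < p))).trans_le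
      (le_csInf ⟨_, 1, le_rfl, rfl⟩ ?_)
    rintro _ ⟨n, hn, rfl⟩
    exact CantorInteger.inv_le_cantorB hs (by omega) hpos hn
  exact tendsto_inv_log_mul_sum_of_tendsto_blockSum hs (fun n => by split_ifs <;> positivity)
    (CantorInteger.tendsto_blockSum_cantorB hs hp hrange hlam (hm_pos.trans_le hα.1))

theorem stmt15 (p s : ℕ) (h : ℕ → ℕ) (hs : 2 ≤ s) (hp : s < p)
    (hmono : ∀ i j, i < j → j < s → h i < h j)
    (hrange : ∀ i, i < s → h i < p)
    (m M : ℝ) (hm : m = sInf {x : ℝ | ∃ n : ℕ, 1 ≤ n ∧ cantorB p s h n = x})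
    (hM : M = sSup {x : ℝ | ∃ n : ℕ, 1 ≤ n ∧ cantorB p s h n = x})
    (lam : ℝ → ℝ)
    (hlam : ∀ x : ℝ, 0 < x →
      Tendsto (fun k : ℕ => cantorA p s h ((s : ℝ) ^ k * x) / ((s : ℝ) ^ k * x) ^ Real.logb s p)
        atTop (nhds (lam x))) :
    ∀ α ∈ Set.Icc m M,
      Tendsto
        (fun x : ℝ => (Real.log x)⁻¹ *
          ∑ n ∈ Finset.Icc 1 ⌊x⌋₊, if cantorB p s h n ≤ α then (1 : ℝ) / n else 0)
        atTop
        (nhds ((Real.log s)⁻¹ *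
          ∫ y in {x : ℝ | x ∈ Set.Ico ((s : ℝ)⁻¹) 1 ∧ lam x ≤ α}, 1 / y)) :=
  stmt15_general p s h hs hp hmono hrange m M hm lam hlam
end
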